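/- arXiv:1604.02825 — 2 statements merged into one kernel-verified Lean document; each statement's English description precedes it below -/
import Mathlib

section
/- Let 𝓗 be an n×n Hermitian complex matrix and W an n×k complex matrix such that Δ = 𝓗 + iπWW† is invertible (π the circle constant). Then the scattering matrix S = I_k − 2πi·W†Δ⁻¹W is unitary: S†S = S S† = I_k. -/
open Matrix

/-- Unitarity of the Weidenmüller scattering-matrix formula (Eq. (3)): for an `n × n`
Hermitian matrix `𝓗` and an `n × k` complex coupling matrix `W` with
`Δ = 𝓗 + iπ W Wᴴ` invertible, the scattering matrix `S = I − 2πi Wᴴ Δ⁻¹ W` is unitary. -/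
theorem weidenmuller_unitary (n k : ℕ) (𝓗 : Matrix (Fin n) (Fin n) ℂ) (h𝓗 : 𝓗.IsHermitian)
    (W : Matrix (Fin n) (Fin k) ℂ)
    (hΔ : IsUnit (𝓗 + ((Real.pi : ℂ) * Complex.I) • (W * Wᴴ)))
    (S : Matrix (Fin k) (Fin k) ℂ)
    (hS : S = 1 - ((2 * (Real.pi : ℂ)) * Complex.I) •
        (Wᴴ * (𝓗 + ((Real.pi : ℂ) * Complex.I) • (W * Wᴴ))⁻¹ * W)) :
    Sᴴ * S = 1 ∧ S * Sᴴ = 1 := by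
  set c : ℂ := (2 * (Real.pi : ℂ)) * Complex.I with hc
  set Δ : Matrix (Fin n) (Fin n) ℂ := 𝓗 + ((Real.pi : ℂ) * Complex.I) • (W * Wᴴ) with hΔdef
  have hc0 : c ≠ 0 := by
    simp [hc, Real.pi_ne_zero, Complex.I_ne_zero, Complex.ofReal_ne_zero]
  have hdet : IsUnit Δ.det := (Matrix.isUnit_iff_isUnit_det Δ).mp hΔ
  have hΔA : Δ * Δ⁻¹ = 1 := Matrix.mul_nonsing_inv Δ hdet
  have hAΔ : Δ⁻¹ * Δ = 1 := Matrix.nonsing_inv_mul Δ hdet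
  have hΔH : Δᴴ = 𝓗 - ((Real.pi : ℂ) * Complex.I) • (W * Wᴴ) := by
    rw [hΔdef, conjTranspose_add, conjTranspose_smul, conjTranspose_mul,
      conjTranspose_conjTranspose, h𝓗.eq]
    have : star ((Real.pi : ℂ) * Complex.I) = -((Real.pi : ℂ) * Complex.I) := by
      simp [Complex.ext_iff]
    rw [this, neg_smul, sub_eq_add_neg]
  have hΔHdet : IsUnit Δᴴ.det := by
    rw [Matrix.det_conjTranspose]
    exact hdet.star
  have hΔHB : Δᴴ * Δᴴ⁻¹ = 1 := Matrix.mul_nonsing_inv _ hΔHdet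
  have hBΔH : Δᴴ⁻¹ * Δᴴ = 1 := Matrix.nonsing_inv_mul _ hΔHdet
  have hdiff : Δ - Δᴴ = c • (W * Wᴴ) := by
    rw [hΔH, hΔdef, hc]
    module
  set A : Matrix (Fin n) (Fin n) ℂ := Δ⁻¹ with hA
  set B : Matrix (Fin n) (Fin n) ℂ := Δᴴ⁻¹ with hB
  have hWW : W * Wᴴ = c⁻¹ • (Δ - Δᴴ) := by
    rw [hdiff, smul_smul, inv_mul_cancel₀ hc0, one_smul]
  set X : Matrix (Fin k) (Fin k) ℂ := Wᴴ * B * W with hX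
  set Y : Matrix (Fin k) (Fin k) ℂ := Wᴴ * A * W with hY
  have hSH : Sᴴ = 1 + c • X := by
    rw [hS, conjTranspose_sub, conjTranspose_one, conjTranspose_smul, conjTranspose_mul,
      conjTranspose_mul, conjTranspose_conjTranspose]
    have h1 : star c = -c := by simp [hc, Complex.ext_iff]
    have h2 : (Δ⁻¹)ᴴ = Δᴴ⁻¹ := (Matrix.conjTranspose_nonsing_inv Δ).symm ▸ rfl
    rw [h1, neg_smul, sub_neg_eq_add]
    congr 1
    rw [hX, hB, ← h2]
    rw [Matrix.mul_assoc]
  have hXY : X * Y = c⁻¹ • (X - Y) := by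
    have : X * Y = Wᴴ * B * (W * Wᴴ) * (A * W) := by
      rw [hX, hY]; simp only [Matrix.mul_assoc]
    rw [this, hWW, Matrix.mul_smul, Matrix.smul_mul]
    congr 1
    rw [Matrix.mul_sub (Wᴴ * B), Matrix.sub_mul]
    have e1 : Wᴴ * B * Δ * (A * W) = Wᴴ * B * W := by
      rw [Matrix.mul_assoc (Wᴴ * B) Δ (A * W), ← Matrix.mul_assoc Δ A W, hΔA,
        Matrix.one_mul]
    have e2 : Wᴴ * B * Δᴴ * (A * W) = Wᴴ * (A * W) := by
      rw [Matrix.mul_assoc Wᴴ B Δᴴ, hBΔH, Matrix.mul_one]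
    rw [e1, e2, ← Matrix.mul_assoc Wᴴ A W]
  have hmain : Sᴴ * S = 1 := by
    rw [hSH, hS]
    simp only [Matrix.add_mul, Matrix.mul_sub, Matrix.one_mul, Matrix.mul_one,
      Matrix.smul_mul, Matrix.mul_smul, hXY, smul_smul]
    rw [mul_inv_cancel₀ hc0, one_smul, smul_add, smul_sub]
    abel
  exact ⟨hmain, (mul_eq_one_comm).mp hmain⟩
end

section
/- Let 𝓗 and Γ be n×n Hermitian complex matrices with Γ positive semidefinite, let W be an n×k complex matrix, and suppose Δ = 𝓗 + iΓ + iπWW† is invertible. Define S = I_k − 2πi·W†Δ⁻¹W. Then I_k − S†S = 4π·W†(Δ⁻¹)†ΓΔ⁻¹W, which is positive semidefinite; hence ‖Sx‖ ≤ ‖x‖ for every x ∈ ℂᵏ, and S is unitary if Γ = 0. -/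
open Matrix
open scoped ComplexOrder

/-!
Write `A = Δ⁻¹` and `S = 1 - c Wᴴ A W`. Expanding `1 - SᴴS` and inserting `Aᴴ Δᴴ = 1` and
`Δ A = 1` factors it as `Wᴴ Aᴴ (c Δᴴ + c̄ Δ - |c|² W Wᴴ) A W`. For `c = 2πi` and
`Δ = 𝓗 + iΓ + iπ W Wᴴ` the Hermitian parts cancel in the bracket and the coupling term `iπ W Wᴴ`
is exactly compensated by `|c|² W Wᴴ`, leaving `4π Γ`; hence `1 - SᴴS` is a congruence of
`Γ ≥ 0` and so is positive semidefinite.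
-/

theorem one_sub_conjTranspose_mul_self_one_sub_smul_inv {R n k : Type*} [CommRing R]
    [StarRing R] [Fintype n] [DecidableEq n] [Fintype k] [DecidableEq k]
    {Δ : Matrix n n R} (hΔ : IsUnit Δ) (W : Matrix n k R) (c : R) :
    1 - (1 - c • (Wᴴ * Δ⁻¹ * W))ᴴ * (1 - c • (Wᴴ * Δ⁻¹ * W)) =
      Wᴴ * Δ⁻¹ᴴ * (c • Δᴴ + star c • Δ - (star c * c) • (W * Wᴴ)) * Δ⁻¹ * W := by
  have hdet : IsUnit Δ.det := (isUnit_iff_isUnit_det Δ).mp hΔ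
  have hdetH : IsUnit Δᴴ.det := by rwa [det_conjTranspose, isUnit_star]
  simp only [conjTranspose_sub, conjTranspose_one, conjTranspose_smul, conjTranspose_mul,
    conjTranspose_conjTranspose, conjTranspose_nonsing_inv, Matrix.mul_assoc, Matrix.sub_mul,
    Matrix.mul_sub, Matrix.add_mul, Matrix.mul_add, Matrix.smul_mul, Matrix.mul_smul,
    Matrix.one_mul, Matrix.mul_one, nonsing_inv_mul_cancel_left _ _ hdetH,
    mul_nonsing_inv_cancel_left _ _ hdet]
  module

theorem two_mul_I_smul_conjTranspose_add_star_smul_sub {n k : Type*} [Fintype k]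
    {𝓗 Γ : Matrix n n ℂ} (h𝓗 : 𝓗.IsHermitian) (hΓ : Γ.IsHermitian) (W : Matrix n k ℂ) (t : ℝ)
    {Δ : Matrix n n ℂ} (hΔ : Δ = 𝓗 + Complex.I • Γ + (t * Complex.I) • (W * Wᴴ)) :
    (2 * t * Complex.I) • Δᴴ + star (2 * t * Complex.I) • Δ -
        (star (2 * t * Complex.I) * (2 * t * Complex.I)) • (W * Wᴴ) =
      ((4 * t : ℝ) : ℂ) • Γ := by
  have hstar : star (2 * t * Complex.I) = -(2 * t * Complex.I) := by simp
  have hΔH : Δᴴ = 𝓗 - Complex.I • Γ - (t * Complex.I) • (W * Wᴴ) := by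
    simp [hΔ, h𝓗.eq, hΓ.eq, sub_eq_add_neg]
  rw [hstar, hΔH, hΔ]
  simp only [smul_add, smul_sub, smul_smul]
  push_cast
  ring_nf
  simp only [Complex.I_sq]
  module

theorem norm_toEuclideanLin_le_of_posSemidef_one_sub {𝕜 m n : Type*} [RCLike 𝕜]
    [Fintype m] [Fintype n] [DecidableEq m] [DecidableEq n] {S : Matrix m n 𝕜}
    (hS : (1 - Sᴴ * S).PosSemidef) (x : EuclideanSpace 𝕜 n) :
    ‖S.toEuclideanLin x‖ ≤ ‖x‖ := by
  have hnonneg := (isPositive_toEuclideanLin_iff.mpr hS).re_inner_nonneg_left x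
  have happly : (1 - Sᴴ * S).toEuclideanLin x = x - Sᴴ.toEuclideanLin (S.toEuclideanLin x) := by
    ext i
    simp [mulVec_mulVec]
  rw [happly, toEuclideanLin_conjTranspose_eq_adjoint, inner_sub_left,
    LinearMap.adjoint_inner_left, map_sub, sub_nonneg] at hnonneg
  rw [← sq_le_sq₀ (norm_nonneg _) (norm_nonneg _), ← inner_self_eq_norm_sq (𝕜 := 𝕜),
    ← inner_self_eq_norm_sq (𝕜 := 𝕜)]
  exact hnonneg

theorem lossy_scattering_subunitary_general (n k : ℕ) (𝓗 Γ : Matrix (Fin n) (Fin n) ℂ)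
    (h𝓗 : 𝓗.IsHermitian) (hΓ : Γ.PosSemidef)
    (W : Matrix (Fin n) (Fin k) ℂ)
    (Δ : Matrix (Fin n) (Fin n) ℂ)
    (hΔdef : Δ = 𝓗 + Complex.I • Γ + ((Real.pi : ℂ) * Complex.I) • (W * Wᴴ))
    (hΔ : IsUnit Δ)
    (S : Matrix (Fin k) (Fin k) ℂ)
    (hS : S = 1 - ((2 * (Real.pi : ℂ)) * Complex.I) • (Wᴴ * Δ⁻¹ * W)) :
    (1 - Sᴴ * S = ((4 * Real.pi : ℝ) : ℂ) • (Wᴴ * (Δ⁻¹)ᴴ * Γ * Δ⁻¹ * W)) ∧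
    (1 - Sᴴ * S).PosSemidef ∧
    (∀ x : EuclideanSpace ℂ (Fin k), ‖Matrix.toEuclideanLin S x‖ ≤ ‖x‖) ∧
    (Γ = 0 → Sᴴ * S = 1 ∧ S * Sᴴ = 1) := by
  have hloss : 1 - Sᴴ * S = ((4 * Real.pi : ℝ) : ℂ) • (Wᴴ * (Δ⁻¹)ᴴ * Γ * Δ⁻¹ * W) := by
    rw [hS, one_sub_conjTranspose_mul_self_one_sub_smul_inv hΔ,
      two_mul_I_smul_conjTranspose_add_star_smul_sub h𝓗 hΓ.isHermitian W Real.pi hΔdef]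
    simp only [Matrix.mul_smul, Matrix.smul_mul]
  have hpsd : (1 - Sᴴ * S).PosSemidef := by
    have hcongr : (Δ⁻¹ * W)ᴴ * Γ * (Δ⁻¹ * W) = Wᴴ * (Δ⁻¹)ᴴ * Γ * Δ⁻¹ * W := by
      simp only [conjTranspose_mul, Matrix.mul_assoc]
    rw [hloss, ← hcongr]
    exact (hΓ.conjTranspose_mul_mul_same _).smul (Complex.zero_le_real.mpr (by positivity))
  refine ⟨hloss, hpsd, norm_toEuclideanLin_le_of_posSemidef_one_sub hpsd, fun hΓ0 => ?_⟩
  have hunitary : Sᴴ * S = 1 := by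
    simp only [hΓ0, Matrix.mul_zero, Matrix.zero_mul, smul_zero, sub_eq_zero] at hloss
    exact hloss.symm
  exact ⟨hunitary, mul_eq_one_comm.mp hunitary⟩

/-- Sub-unitarity of the lossy scattering matrix (Eq. (8)): for Hermitian `𝓗`, positive
semidefinite Hermitian loss matrix `Γ`, coupling matrix `W`, and
`Δ = 𝓗 + iΓ + iπ W Wᴴ` invertible, the scattering matrix `S = I − 2πi Wᴴ Δ⁻¹ W` satisfies
`I − SᴴS = 4π Wᴴ (Δ⁻¹)ᴴ Γ Δ⁻¹ W`, which is positive semidefinite; hence `‖Sx‖ ≤ ‖x‖` for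
every `x ∈ ℂᵏ`, and `S` is unitary if `Γ = 0`. -/
theorem lossy_scattering_subunitary (n k : ℕ) (𝓗 Γ : Matrix (Fin n) (Fin n) ℂ)
    (h𝓗 : 𝓗.IsHermitian) (hΓHerm : Γ.IsHermitian) (hΓ : Γ.PosSemidef)
    (W : Matrix (Fin n) (Fin k) ℂ)
    (Δ : Matrix (Fin n) (Fin n) ℂ)
    (hΔdef : Δ = 𝓗 + Complex.I • Γ + ((Real.pi : ℂ) * Complex.I) • (W * Wᴴ))
    (hΔ : IsUnit Δ)
    (S : Matrix (Fin k) (Fin k) ℂ)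
    (hS : S = 1 - ((2 * (Real.pi : ℂ)) * Complex.I) • (Wᴴ * Δ⁻¹ * W)) :
    (1 - Sᴴ * S = ((4 * Real.pi : ℝ) : ℂ) • (Wᴴ * (Δ⁻¹)ᴴ * Γ * Δ⁻¹ * W)) ∧
    (1 - Sᴴ * S).PosSemidef ∧
    (∀ x : EuclideanSpace ℂ (Fin k), ‖Matrix.toEuclideanLin S x‖ ≤ ‖x‖) ∧
    (Γ = 0 → Sᴴ * S = 1 ∧ S * Sᴴ = 1) :=
  lossy_scattering_subunitary_general n k 𝓗 Γ h𝓗 hΓ W Δ hΔdef hΔ S hS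
end
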